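/- Let T be a tree and let T' be obtained from T by (i) subdividing every edge once and (ii) attaching ℓ new pendant leaves to every original vertex of T. Then td(T') ≤ td(T) + 1. -/

import Mathlib

/-- An elimination forest of height at most `h`. -/
def ElimForestLE {V : Type*} (G : SimpleGraph V) (h : ℕ) : Prop :=
  ∃ le : V → V → Prop, IsPartialOrder V le ∧
    (∀ v : V, IsChain le {u | le u v}) ∧
    (∀ u v : V, G.Adj u v → le u v ∨ le v u) ∧
    (∀ v : V, {u | le u v}.ncard ≤ h)

/-- The treedepth of a graph: the minimum height of an elimination forest. -/
noncomputable def treedepth {V : Type*} (G : SimpleGraph V) : ℕ :=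
  sInf {h | ElimForestLE G h}

/-- The edges of `T` oriented from the smaller endpoint to the larger one. -/
def OrientedEdges {V : Type*} [LinearOrder V] (T : SimpleGraph V) : Type _ :=
  {p : V × V // T.Adj p.1 p.2 ∧ p.1 < p.2}

/-- The graph `T'` obtained from `T` by subdividing every edge once (the new
vertex `w_e` of edge `e` is adjacent exactly to the two endpoints of `e`) and
attaching `ℓ` new pendant leaves to every original vertex of `T`. -/
def Gadget {V : Type*} [LinearOrder V] (T : SimpleGraph V) (ℓ : ℕ) :
    SimpleGraph (V ⊕ (OrientedEdges T ⊕ V × Fin ℓ)) :=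
  SimpleGraph.fromRel (fun x y =>
    match x, y with
    | Sum.inl u, Sum.inr (Sum.inl e) => u = e.1.1 ∨ u = e.1.2
    | Sum.inl u, Sum.inr (Sum.inr (v, _)) => u = v
    | _, _ => False)

/-!
Take an elimination forest of `T` of height `td(T)`, given as its ancestor relation. Every new
vertex is adjacent to at most two original vertices, and these are equal or adjacent in `T`,
hence comparable in the forest; hanging the new vertex as a leaf below the lower of the two
makes all its edges ancestor–descendant pairs, and raises the height by at most one.
-/

open Set Sum

section HangLeaves

variable {V W : Type*} (le : V → V → Prop) (base : W → V)

/-- The ancestor relation of the forest in which each `w : W` becomes a leaf child of `base w`. -/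
def hangLeaves : V ⊕ W → V ⊕ W → Prop
  | inl u, inl v => le u v
  | inl u, inr w => le u (base w)
  | inr w, inr w' => w = w'
  | inr _, inl _ => False

theorem isPartialOrder_hangLeaves [IsPartialOrder V le] :
    IsPartialOrder (V ⊕ W) (hangLeaves le base) where
  refl := by rintro (u | w); exacts [refl_of le u, rfl]
  trans := by
    rintro (a | a) (b | b) (c | c) hab hbc <;> simp only [hangLeaves] at hab hbc ⊢
    all_goals first | exact trans_of le hab hbc | exact hbc ▸ hab
  antisymm := by
    rintro (a | a) (b | b) hab hba <;> simp only [hangLeaves] at hab hba ⊢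
    exacts [congrArg inl (antisymm_of le hab hba), congrArg inr hab]

theorem setOf_hangLeaves_inl (v : V) :
    {x | hangLeaves le base x (inl v)} = inl '' {u | le u v} := by
  ext (x | x) <;> simp [hangLeaves]

theorem setOf_hangLeaves_inr (w : W) :
    {x | hangLeaves le base x (inr w)} = insert (inr w) (inl '' {u | le u (base w)}) := by
  ext (x | x) <;> simp [hangLeaves, eq_comm]

theorem isChain_setOf_hangLeaves (hchain : ∀ v, IsChain le {u | le u v}) (x : V ⊕ W) :
    IsChain (hangLeaves le base) {y | hangLeaves le base y x} := by
  rcases x with v | w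
  · rw [setOf_hangLeaves_inl]
    exact (hchain v).image_of_map_rel le _ inl fun _ _ h => h
  · rw [setOf_hangLeaves_inr]
    refine IsChain.insert ((hchain (base w)).image_of_map_rel le _ inl fun _ _ h => h) ?_
    rintro _ ⟨u, hu, rfl⟩ -
    exact Or.inr hu

theorem ncard_setOf_hangLeaves_le {h : ℕ} (hcard : ∀ v, {u | le u v}.ncard ≤ h) (x : V ⊕ W) :
    {y | hangLeaves le base y x}.ncard ≤ h + 1 := by
  rcases x with v | w
  · rw [setOf_hangLeaves_inl, ncard_image_of_injective _ inl_injective]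
    exact (hcard v).trans h.le_succ
  · rw [setOf_hangLeaves_inr]
    calc _ ≤ (inl '' {u | le u (base w)} : Set (V ⊕ W)).ncard + 1 := ncard_insert_le _ _
      _ ≤ h + 1 := by
        rw [ncard_image_of_injective _ inl_injective]
        exact Nat.add_le_add_right (hcard _) 1

end HangLeaves

theorem ElimForestLE.sum_add_one {V W : Type*} {G : SimpleGraph V} {H : SimpleGraph (V ⊕ W)}
    {h : ℕ} (hG : ElimForestLE G h)
    (hVV : ∀ u v, H.Adj (inl u) (inl v) → G.Adj u v)
    (hWW : ∀ w w', ¬ H.Adj (inr w) (inr w'))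
    (hVW : ∀ w, ∃ a b, (a = b ∨ G.Adj a b) ∧ ∀ u, H.Adj (inl u) (inr w) → u = a ∨ u = b) :
    ElimForestLE H (h + 1) := by
  obtain ⟨le, hpo, hchain, hadj, hcard⟩ := hG
  have hbase : ∀ w, ∃ c, ∀ u, H.Adj (inl u) (inr w) → le u c := by
    intro w
    obtain ⟨a, b, hab, hN⟩ := hVW w
    have hcomp : le a b ∨ le b a := hab.elim (fun e => e ▸ Or.inl (refl_of le a)) (hadj a b)
    rcases hcomp with h | h
    · exact ⟨b, fun u hu => (hN u hu).elim (· ▸ h) (· ▸ refl_of le b)⟩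
    · exact ⟨a, fun u hu => (hN u hu).elim (· ▸ refl_of le a) (· ▸ h)⟩
  choose base hbase using hbase
  refine ⟨hangLeaves le base, isPartialOrder_hangLeaves le base,
    isChain_setOf_hangLeaves le base hchain, ?_, ncard_setOf_hangLeaves_le le base hcard⟩
  rintro (u | w) (v | w') huv
  · exact hadj u v (hVV u v huv)
  · exact Or.inl (hbase w' u huv)
  · exact Or.inr (hbase w v huv.symm)
  · exact (hWW w w' huv).elim

theorem elimForestLE_treedepth {V : Type*} [Finite V] (G : SimpleGraph V) :
    ElimForestLE G (treedepth G) := by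
  have : Fintype V := Fintype.ofFinite V
  let : LinearOrder V := LinearOrder.lift' _ (Fintype.equivFin V).injective
  refine Nat.sInf_mem (s := {h | ElimForestLE G h}) ⟨Fintype.card V, (· ≤ ·), inferInstance,
    fun _ a _ b _ _ => le_total a b, fun u v _ => le_total u v, fun v => ?_⟩
  rw [← Nat.card_eq_fintype_card, ← ncard_univ]
  exact ncard_le_ncard (subset_univ _)

theorem treedepth_le_of_elimForestLE {V : Type*} {G : SimpleGraph V} {h : ℕ}
    (hG : ElimForestLE G h) : treedepth G ≤ h :=
  Nat.sInf_le hG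

theorem treedepth_sum_le_add_one {V W : Type*} [Finite V] (G : SimpleGraph V) (H : SimpleGraph (V ⊕ W))
    (hVV : ∀ u v, H.Adj (inl u) (inl v) → G.Adj u v)
    (hWW : ∀ w w', ¬ H.Adj (inr w) (inr w'))
    (hVW : ∀ w, ∃ a b, (a = b ∨ G.Adj a b) ∧ ∀ u, H.Adj (inl u) (inr w) → u = a ∨ u = b) :
    treedepth H ≤ treedepth G + 1 :=
  treedepth_le_of_elimForestLE ((elimForestLE_treedepth G).sum_add_one hVV hWW hVW)

theorem stmt_9_general {V : Type} [Fintype V] [LinearOrder V] (T : SimpleGraph V)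
    (ℓ : ℕ) :
    treedepth (Gadget T ℓ) ≤ treedepth T + 1 := by
  refine treedepth_sum_le_add_one T (Gadget T ℓ) (fun u v huv => ?_) (fun w w' hww => ?_) ?_
  · simp [Gadget] at huv
  · simp [Gadget] at hww
  rintro (e | ⟨v, _⟩)
  · exact ⟨e.1.1, e.1.2, Or.inr e.2.1, fun u hu => by simpa [Gadget] using hu⟩
  · exact ⟨v, v, Or.inl rfl, fun u hu => by simpa [Gadget] using hu⟩

/-- If `T'` is obtained from a tree `T` by subdividing every
edge once and attaching `ℓ` pendant leaves to every original vertex, then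
`td(T') ≤ td(T) + 1`. -/
theorem stmt_9 {V : Type} [Fintype V] [LinearOrder V] (T : SimpleGraph V)
    (hT : T.IsTree) (ℓ : ℕ) :
    treedepth (Gadget T ℓ) ≤ treedepth T + 1 :=
  stmt_9_general T ℓ
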